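/- arXiv:2409.19146 — 2 statements merged into one kernel-verified Lean document; each statement's English description precedes it below -/
import Mathlib

section
/- Let f be a ReLU network with K affine layers given by matrices W_m, i.e., z_0(x) = x and z_m(x) = ReLU(W_m z_{m−1}(x)) componentwise. Define interval bounds recursively by l_0 = l, u_0 = u, and for m = 1,…,K: l_m = ReLU(W_m⁺ l_{m−1} − W_m⁻ u_{m−1}) and u_m = ReLU(W_m⁺ u_{m−1} − W_m⁻ l_{m−1}), where W_m⁺ and W_m⁻ are the entrywise positive and negative parts of W_m. Then for every input x̃ with l ≤ x̃ ≤ u componentwise, the network output satisfies l_K ≤ f(x̃) ≤ u_K componentwise. (Soundness of the certify bound module: every pixel of the output density map lies in its propagated interval [z̲_{Ki}, z̄_{Ki}]) -/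
/-- ReLU activation. -/
noncomputable def relu (t : ℝ) : ℝ := max t 0

/-- A ReLU network with affine layers given by matrices `W m`:
`z_0(x) = x`, `z_{m+1}(x) = ReLU(W_m z_m(x))` componentwise.
`net n W m x` is the output `z_m(x)` of the `m`-th layer on input `x`. -/
noncomputable def net (n : ℕ → ℕ) (W : ∀ m : ℕ, Matrix (Fin (n (m + 1))) (Fin (n m)) ℝ) :
    ∀ m : ℕ, (Fin (n 0) → ℝ) → (Fin (n m) → ℝ)
  | 0 => fun x => x
  | m + 1 => fun x j => relu ((W m).mulVec (net n W m x) j)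

/-- Entrywise positive part of a matrix: `(W⁺)_{jk} = max(W_{jk}, 0)`. -/
def pospart {a b : ℕ} (W : Matrix (Fin a) (Fin b) ℝ) : Matrix (Fin a) (Fin b) ℝ :=
  Matrix.of fun j k => max (W j k) 0

/-- Entrywise negative part of a matrix: `(W⁻)_{jk} = max(−W_{jk}, 0)`. -/
def negpart {a b : ℕ} (W : Matrix (Fin a) (Fin b) ℝ) : Matrix (Fin a) (Fin b) ℝ :=
  Matrix.of fun j k => max (-W j k) 0

/-- Interval bound propagation through the network: `ibp n W l u m = (l_m, u_m)` where
`l_0 = l`, `u_0 = u`, and for each layer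
`l_{m+1} = ReLU(W_m⁺ l_m − W_m⁻ u_m)`, `u_{m+1} = ReLU(W_m⁺ u_m − W_m⁻ l_m)`. -/
noncomputable def ibp (n : ℕ → ℕ) (W : ∀ m : ℕ, Matrix (Fin (n (m + 1))) (Fin (n m)) ℝ)
    (l u : Fin (n 0) → ℝ) : ∀ m : ℕ, (Fin (n m) → ℝ) × (Fin (n m) → ℝ)
  | 0 => (l, u)
  | m + 1 =>
    (fun j => relu ((pospart (W m)).mulVec (ibp n W l u m).1 j -
        (negpart (W m)).mulVec (ibp n W l u m).2 j),
      fun j => relu ((pospart (W m)).mulVec (ibp n W l u m).2 j -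
        (negpart (W m)).mulVec (ibp n W l u m).1 j))

/-- **Soundness of the certify bound module.** For a ReLU network with `K` affine layers and
interval bounds `l_K`, `u_K` obtained by interval bound propagation from `l_0 = l`, `u_0 = u`,
every input `x̃` with `l ≤ x̃ ≤ u` componentwise has output satisfying
`l_K ≤ f(x̃) ≤ u_K` componentwise. -/
theorem ibp_sound (K : ℕ) (n : ℕ → ℕ)
    (W : ∀ m : ℕ, Matrix (Fin (n (m + 1))) (Fin (n m)) ℝ)
    (l u : Fin (n 0) → ℝ) (xt : Fin (n 0) → ℝ)
    (hl : ∀ i, l i ≤ xt i) (hu : ∀ i, xt i ≤ u i) :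
    ∀ j : Fin (n K),
      (ibp n W l u K).1 j ≤ net n W K xt j ∧ net n W K xt j ≤ (ibp n W l u K).2 j := by
  induction K with
  | zero => exact fun j => ⟨hl j, hu j⟩
  | succ m ih =>
    intro j
    have key : (pospart (W m)).mulVec (ibp n W l u m).1 j -
        (negpart (W m)).mulVec (ibp n W l u m).2 j ≤ (W m).mulVec (net n W m xt) j ∧
        (W m).mulVec (net n W m xt) j ≤ (pospart (W m)).mulVec (ibp n W l u m).2 j -
        (negpart (W m)).mulVec (ibp n W l u m).1 j := by
      simp only [Matrix.mulVec, dotProduct, ← Finset.sum_sub_distrib]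
      constructor <;> apply Finset.sum_le_sum <;> intro k _ <;>
        obtain ⟨h1, h2⟩ := ih k
      · have hsplit : W m j k = pospart (W m) j k - negpart (W m) j k := by
          rcases le_total (W m j k) 0 with h | h
          · simp [pospart, negpart, max_eq_right h, max_eq_left (neg_nonneg.2 h)]
          · simp [pospart, negpart, max_eq_left h, max_eq_right (neg_nonpos.2 h)]
        rw [hsplit]; ring_nf
        have hp : (0:ℝ) ≤ pospart (W m) j k := le_max_right _ _
        have hn : (0:ℝ) ≤ negpart (W m) j k := le_max_right _ _
        nlinarith [mul_le_mul_of_nonneg_left h1 hp, mul_le_mul_of_nonneg_left h2 hn]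
      · have hsplit : W m j k = pospart (W m) j k - negpart (W m) j k := by
          rcases le_total (W m j k) 0 with h | h
          · simp [pospart, negpart, max_eq_right h, max_eq_left (neg_nonneg.2 h)]
          · simp [pospart, negpart, max_eq_left h, max_eq_right (neg_nonpos.2 h)]
        rw [hsplit]; ring_nf
        have hp : (0:ℝ) ≤ pospart (W m) j k := le_max_right _ _
        have hn : (0:ℝ) ≤ negpart (W m) j k := le_max_right _ _
        nlinarith [mul_le_mul_of_nonneg_left h2 hp, mul_le_mul_of_nonneg_left h1 hn]
    exact ⟨max_le_max key.1 le_rfl, max_le_max key.2 le_rfl⟩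
end

section
/- Let f be a ReLU network with K ≥ 1 affine layers given by matrices W_m, i.e., z_0(x) = x and z_m(x) = ReLU(W_m z_{m−1}(x)) componentwise. If x̃ satisfies ‖x̃ − x‖₂ ≤ ε₂, then ‖f(x̃) − f(x)‖_∞ ≤ ε₂ · (max_j ‖(W₁)_j‖₂) · ∏_{m=2}^{K} max_j ‖(W_m)_j‖₁. (Combination of Lemma 1 with the inductive argument of Theorem 1, giving the full-network guarantee for ℓ₂-bounded perturbations) -/
/-- The ℓ² norm of a real vector. -/
noncomputable def l2norm {d : ℕ} (v : Fin d → ℝ) : ℝ := Real.sqrt (∑ i, v i ^ 2)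

lemma l2norm_nonneg {d : ℕ} (v : Fin d → ℝ) : 0 ≤ l2norm v := Real.sqrt_nonneg _

lemma abs_sum_mul_le {d : ℕ} (v w : Fin d → ℝ) : |∑ i, v i * w i| ≤ l2norm v * l2norm w := by
  have h := Finset.sum_mul_sq_le_sq_mul_sq Finset.univ v w
  have : |∑ i, v i * w i| = Real.sqrt ((∑ i, v i * w i) ^ 2) := (Real.sqrt_sq_eq_abs _).symm
  rw [this, l2norm, l2norm, ← Real.sqrt_mul (by positivity)]
  exact Real.sqrt_le_sqrt h

lemma relu_lip (a b : ℝ) : |relu a - relu b| ≤ |a - b| := abs_max_sub_max_le_abs a b 0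

lemma iSup_fin_nonneg {d : ℕ} (f : Fin d → ℝ) (h : ∀ i, 0 ≤ f i) : 0 ≤ ⨆ i, f i :=
  Real.iSup_nonneg h

lemma le_iSup_fin {d : ℕ} (f : Fin d → ℝ) (i : Fin d) : f i ≤ ⨆ j, f j :=
  le_ciSup (Set.Finite.bddAbove (Set.finite_range f)) i


/-- **Full-network guarantee for ℓ₂-bounded perturbations** (Lemma 1 combined with the
inductive argument of Theorem 1). For a ReLU network `f` with `K ≥ 1` affine layers,
if `‖x̃ − x‖₂ ≤ ε₂` then
`‖f(x̃) − f(x)‖_∞ ≤ ε₂ · (max_j ‖(W₁)_j‖₂) · ∏_{m=2}^{K} max_j ‖(W_m)_j‖₁`.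
The norm on `Fin d → ℝ` is the sup (ℓ∞) norm; `∑ k, |W m j k|` is the ℓ¹ norm of the
`j`-th row of `W m`. Layers are indexed from `0`, so `W 0` is the first layer `W₁` and
the product over `m ∈ [1, K)` corresponds to `∏_{m=2}^{K}`. -/
theorem l2_full_network (K : ℕ) (hK : 1 ≤ K) (n : ℕ → ℕ)
    (W : ∀ m : ℕ, Matrix (Fin (n (m + 1))) (Fin (n m)) ℝ)
    (x xt : Fin (n 0) → ℝ) (ε₂ : ℝ)
    (hx : l2norm (xt - x) ≤ ε₂) :
    ‖net n W K xt - net n W K x‖ ≤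
      ε₂ * (⨆ j : Fin (n 1), l2norm (fun k => W 0 j k)) *
        ∏ m ∈ Finset.Ico 1 K, ⨆ j : Fin (n (m + 1)), ∑ k, |W m j k| := by
  have hε : 0 ≤ ε₂ := le_trans (l2norm_nonneg _) hx
  have hC0 : 0 ≤ ⨆ j : Fin (n 1), l2norm (fun k => W 0 j k) :=
    iSup_fin_nonneg _ fun j => l2norm_nonneg _
  induction K, hK using Nat.le_induction with
  | base =>
    simp only [Finset.Ico_self, Finset.prod_empty, mul_one]
    rw [pi_norm_le_iff_of_nonneg (by positivity)]
    intro j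
    rw [Pi.sub_apply, Real.norm_eq_abs]
    show |relu ((W 0).mulVec xt j) - relu ((W 0).mulVec x j)| ≤ _
    refine le_trans (relu_lip _ _) ?_
    have h1 : (W 0).mulVec xt j - (W 0).mulVec x j = ∑ k, W 0 j k * (xt - x) k := by
      simp [Matrix.mulVec, dotProduct, ← Finset.sum_sub_distrib, mul_sub]
    rw [h1]
    calc |∑ k, W 0 j k * (xt - x) k| ≤ l2norm (fun k => W 0 j k) * l2norm (xt - x) :=
          abs_sum_mul_le _ _
      _ ≤ (⨆ j : Fin (n 1), l2norm (fun k => W 0 j k)) * ε₂ :=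
          mul_le_mul (le_iSup_fin (fun j => l2norm (fun k => W 0 j k)) j) hx (l2norm_nonneg _) hC0
      _ = ε₂ * ⨆ j : Fin (n 1), l2norm (fun k => W 0 j k) := mul_comm _ _
  | succ K hK ih =>
    have hprod : ∀ m ∈ Finset.Ico 1 K, (0:ℝ) ≤ ⨆ j : Fin (n (m + 1)), ∑ k, |W m j k| :=
      fun m _ => iSup_fin_nonneg _ fun j => Finset.sum_nonneg fun k _ => abs_nonneg _
    have hP : (0:ℝ) ≤ ∏ m ∈ Finset.Ico 1 K, ⨆ j : Fin (n (m + 1)), ∑ k, |W m j k| :=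
      Finset.prod_nonneg hprod
    have hCK : (0:ℝ) ≤ ⨆ j : Fin (n (K + 1)), ∑ k, |W K j k| :=
      iSup_fin_nonneg _ fun j => Finset.sum_nonneg fun k _ => abs_nonneg _
    rw [Finset.prod_Ico_succ_top hK, ← mul_assoc]
    rw [pi_norm_le_iff_of_nonneg (by positivity)]
    intro j
    rw [Pi.sub_apply, Real.norm_eq_abs]
    show |relu ((W K).mulVec (net n W K xt) j) - relu ((W K).mulVec (net n W K x) j)| ≤ _
    refine le_trans (relu_lip _ _) ?_
    have h1 : (W K).mulVec (net n W K xt) j - (W K).mulVec (net n W K x) j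
        = ∑ k, W K j k * (net n W K xt - net n W K x) k := by
      simp [Matrix.mulVec, dotProduct, ← Finset.sum_sub_distrib, mul_sub]
    rw [h1]
    calc |∑ k, W K j k * (net n W K xt - net n W K x) k|
        ≤ ∑ k, |W K j k * (net n W K xt - net n W K x) k| := Finset.abs_sum_le_sum_abs _ _
      _ ≤ ∑ k, |W K j k| * ‖net n W K xt - net n W K x‖ := by
          refine Finset.sum_le_sum fun k _ => ?_
          rw [abs_mul]
          exact mul_le_mul_of_nonneg_left
            ((Real.norm_eq_abs _ ▸ norm_le_pi_norm (net n W K xt - net n W K x) k))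
            (abs_nonneg _)
      _ = (∑ k, |W K j k|) * ‖net n W K xt - net n W K x‖ := by rw [Finset.sum_mul]
      _ ≤ (⨆ j : Fin (n (K + 1)), ∑ k, |W K j k|) *
            (ε₂ * (⨆ j : Fin (n 1), l2norm (fun k => W 0 j k)) *
              ∏ m ∈ Finset.Ico 1 K, ⨆ j : Fin (n (m + 1)), ∑ k, |W m j k|) :=
          mul_le_mul (le_iSup_fin (fun j => ∑ k, |W K j k|) j) ih (norm_nonneg _) hCK
      _ = _ := by ring
end
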